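/- Let X and Y be irreducible 1-step shifts of finite type over finite alphabets, Z a shift space, and φ : X → Y, ψ : Y → Z 1-block factor codes, with π = ψ ∘ φ. Let y ∈ Y, let l ≥ 1, and suppose the block w = y_{[1,l]} is φ/ψ-presented through M ⊆ 𝒜_X at n. Let x, x' ∈ X satisfy φ(x) ∼_ψ y and φ(x') ∼_ψ y, and suppose there is a ∈ M such that both x_{[1,l]} and x'_{[1,l]} are φ/ψ-routable through a at n. Then there exist both a (φ/ψ,0)-bridge from x to x' and a (φ/ψ,0)-bridge from x' to x. -/

import Mathlib

/- Common definitions: shift spaces over finite alphabets, 1-block factor codes,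
   transition classes, class degrees, relative transition classes, relative class
   degrees, routability and depth. -/

open Set

namespace SymbDyn

variable {A B C D : Type*}

/-- The shift map `σ` on bi-infinite sequences. -/
def shift (α : Type*) : (ℤ → α) → (ℤ → α) := fun x i => x (i + 1)

/-- The map on points induced letterwise by a symbol map (a 1-block code). -/
def sliding (Φ : A → B) : (ℤ → A) → (ℤ → B) := fun x i => Φ (x i)

/-- The block `w` occurs in the point `x` starting at coordinate `n`. -/
def OccursAt (x : ℤ → A) (w : List A) (n : ℤ) : Prop :=
  ∀ i : ℕ, i < w.length → w[i]? = some (x (n + i))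

/-- The block `w` occurs somewhere in the point `x`. -/
def OccursInPoint (x : ℤ → A) (w : List A) : Prop := ∃ n : ℤ, OccursAt x w n

/-- The block `w` occurs in (a point of) the subset `X`. -/
def BlockOccursIn (X : Set (ℤ → A)) (w : List A) : Prop := ∃ x ∈ X, OccursInPoint x w

/-- `X` is a shift space: nonempty, closed (product of discrete topologies) and
shift-invariant. -/
def IsShiftSpace [TopologicalSpace A] (X : Set (ℤ → A)) : Prop :=
  X.Nonempty ∧ IsClosed X ∧ shift A '' X = X

/-- `X` is irreducible: any two blocks of `X` can be connected inside `X`. -/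
def IsIrreducibleShift (X : Set (ℤ → A)) : Prop :=
  ∀ u v : List A, BlockOccursIn X u → BlockOccursIn X v →
    ∃ t : List A, BlockOccursIn X (u ++ t ++ v)

/-- `X` is a 1-step shift of finite type: any point all of whose 2-blocks occur
in `X` lies in `X`. -/
def IsOneStepSFT (X : Set (ℤ → A)) : Prop :=
  ∀ z : ℤ → A, (∀ i : ℤ, BlockOccursIn X [z i, z (i + 1)]) → z ∈ X

/-- `x` is right transitive in `X`: every block of `X` occurs in `x|_[0,∞)`. -/
def RightTransitive (X : Set (ℤ → A)) (x : ℤ → A) : Prop :=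
  ∀ w : List A, BlockOccursIn X w → ∃ n : ℤ, 0 ≤ n ∧ OccursAt x w n

/-- `x` is left transitive in `X`: every block of `X` occurs in `x|_(-∞,0]`. -/
def LeftTransitive (X : Set (ℤ → A)) (x : ℤ → A) : Prop :=
  ∀ w : List A, BlockOccursIn X w → ∃ n : ℤ, n + w.length ≤ 1 ∧ OccursAt x w n

/-- `x` is bi-transitive in `X`. -/
def BiTransitive (X : Set (ℤ → A)) (x : ℤ → A) : Prop :=
  RightTransitive X x ∧ LeftTransitive X x

/-- `x` is recurrent: every block of `x` occurs infinitely often to the right. -/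
def Recurrent (x : ℤ → A) : Prop :=
  ∀ w : List A, OccursInPoint x w → ∀ n : ℤ, ∃ m : ℤ, n ≤ m ∧ OccursAt x w m

/-- `xb` is a `(π,m)`-bridge from `x` to `x'` (all living in `X`). -/
def IsBridge (X : Set (ℤ → A)) (π : (ℤ → A) → ℤ → C) (m : ℤ) (x x' xb : ℤ → A) : Prop :=
  xb ∈ X ∧ (∀ i : ℤ, i ≤ m → xb i = x i) ∧
    (∃ n : ℤ, m < n ∧ ∀ i : ℤ, n ≤ i → xb i = x' i) ∧ π xb = π x

/-- `x →_π x'`: `π x = π x'` and there is a `(π,m)`-bridge from `x` to `x'`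
for every `m`. -/
def TransTo (X : Set (ℤ → A)) (π : (ℤ → A) → ℤ → C) (x x' : ℤ → A) : Prop :=
  π x = π x' ∧ ∀ m : ℤ, ∃ xb, IsBridge X π m x x' xb

/-- `x ∼_π x'`. -/
def TransEquiv (X : Set (ℤ → A)) (π : (ℤ → A) → ℤ → C) (x x' : ℤ → A) : Prop :=
  TransTo X π x x' ∧ TransTo X π x' x

/-- The `π`-transition class `[x]_π` of `x` inside `X`. -/
def transClass (X : Set (ℤ → A)) (π : (ℤ → A) → ℤ → C) (x : ℤ → A) : Set (ℤ → A) :=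
  {x' | x' ∈ X ∧ TransEquiv X π x x'}

/-- The number `d_π(z)` of `π`-transition classes over the point `z`. -/
noncomputable def ptDeg (X : Set (ℤ → A)) (π : (ℤ → A) → ℤ → C) (z : ℤ → C) : ℕ∞ :=
  {S : Set (ℤ → A) | ∃ x ∈ X, π x = z ∧ S = transClass X π x}.encard

/-- The class degree `d_π = min_{z ∈ Z} d_π(z)`. -/
noncomputable def classDeg (X : Set (ℤ → A)) (Z : Set (ℤ → C)) (π : (ℤ → A) → ℤ → C) : ℕ∞ :=
  ⨅ z ∈ Z, ptDeg X π z

/-- `xb` is a `(φ/ψ,m)`-bridge from `x` to `x'` relative to `ψ` (whose transition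
relation lives on `Y`). -/
def IsRelBridge (X : Set (ℤ → A)) (Y : Set (ℤ → B)) (φ : (ℤ → A) → ℤ → B)
    (ψ : (ℤ → B) → ℤ → C) (m : ℤ) (x x' xb : ℤ → A) : Prop :=
  xb ∈ X ∧ (∀ i : ℤ, i ≤ m → xb i = x i) ∧
    (∃ n : ℤ, m < n ∧ ∀ i : ℤ, n ≤ i → xb i = x' i) ∧ TransEquiv Y ψ (φ xb) (φ x)

/-- `x →_{φ/ψ} x'`. -/
def RelTransTo (X : Set (ℤ → A)) (Y : Set (ℤ → B)) (φ : (ℤ → A) → ℤ → B)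
    (ψ : (ℤ → B) → ℤ → C) (x x' : ℤ → A) : Prop :=
  TransEquiv Y ψ (φ x) (φ x') ∧ ∀ m : ℤ, ∃ xb, IsRelBridge X Y φ ψ m x x' xb

/-- `x ∼_{φ/ψ} x'`. -/
def RelTransEquiv (X : Set (ℤ → A)) (Y : Set (ℤ → B)) (φ : (ℤ → A) → ℤ → B)
    (ψ : (ℤ → B) → ℤ → C) (x x' : ℤ → A) : Prop :=
  RelTransTo X Y φ ψ x x' ∧ RelTransTo X Y φ ψ x' x

/-- The `φ/ψ`-transition class `[x]_{φ/ψ}` of `x`. -/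
def relClass (X : Set (ℤ → A)) (Y : Set (ℤ → B)) (φ : (ℤ → A) → ℤ → B)
    (ψ : (ℤ → B) → ℤ → C) (x : ℤ → A) : Set (ℤ → A) :=
  {x' | x' ∈ X ∧ RelTransEquiv X Y φ ψ x x'}

/-- The number `d_{φ/ψ}(y)` of `φ/ψ`-transition classes over `y`. -/
noncomputable def relPtDeg (X : Set (ℤ → A)) (Y : Set (ℤ → B)) (φ : (ℤ → A) → ℤ → B)
    (ψ : (ℤ → B) → ℤ → C) (y : ℤ → B) : ℕ∞ :=
  {S : Set (ℤ → A) | ∃ x ∈ X, φ x = y ∧ S = relClass X Y φ ψ x}.encard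

/-- The class degree `d_{φ/ψ} = min_{y ∈ Y} d_{φ/ψ}(y)` of `φ` relative to `ψ`. -/
noncomputable def relClassDeg (X : Set (ℤ → A)) (Y : Set (ℤ → B)) (φ : (ℤ → A) → ℤ → B)
    (ψ : (ℤ → B) → ℤ → C) : ℕ∞ :=
  ⨅ y ∈ Y, relPtDeg X Y φ ψ y

/-- The block `x|_{[s, s+l-1]}`. -/
def segment (x : ℤ → A) (s : ℤ) (l : ℕ) : List A := (List.range l).map fun i => x (s + i)

/-- The block `u` (of the same length as `w`) is routable through the symbol `a`
at coordinate `n` (coordinates start at 1) with respect to the 1-block code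
induced by `Θ`, over the target block `w`. -/
def RoutableThru (X : Set (ℤ → A)) (Θ : A → C) (w : List C) (n : ℕ) (a : A)
    (u : List A) : Prop :=
  ∃ v : List A, BlockOccursIn X v ∧ v.length = u.length ∧ v.map Θ = w ∧
    v[0]? = u[0]? ∧ v[v.length - 1]? = u[u.length - 1]? ∧
    v[n - 1]? = some a

/-- `u` is `φ/ψ`-routable through `a` at `n` over the block `w` of `Y`. -/
def RelRoutable (X : Set (ℤ → A)) (Φ : A → B) (Ψ : B → C) (w : List B) (n : ℕ) (a : A)
    (u : List A) : Prop :=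
  RoutableThru X (Ψ ∘ Φ) (w.map Ψ) n a u

/-- The block `w` of `Y` is `φ/ψ`-presented through `M` at `n`. -/
def RelPresented (X : Set (ℤ → A)) (Φ : A → B) (Ψ : B → C) (w : List B) (n : ℕ)
    (M : Set A) : Prop :=
  ∀ u : List A, BlockOccursIn X u → u.map Φ = w → ∃ a ∈ M, RelRoutable X Φ Ψ w n a u

/-- The `φ/ψ`-depth `d_{φ/ψ}(w)` of a block `w`. -/
noncomputable def relDepth (X : Set (ℤ → A)) (Φ : A → B) (Ψ : B → C) (w : List B) : ℕ∞ :=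
  sInf {k : ℕ∞ | ∃ n : ℕ, 1 ≤ n ∧ n ≤ w.length ∧
    ∃ M : Finset A, RelPresented X Φ Ψ w n ↑M ∧ k = (M.card : ℕ∞)}

end SymbDyn


/-!
Route `x_{[1,l]}` and `x'_{[1,l]}` through the common symbol `a` at `n`: this gives two blocks of
`X` over `ψ(w)`, the first starting like `x` and the second ending like `x'`, which meet at `n`.
Since `X` is a 1-step shift of finite type, following `x` up to `1`, the first block up to `n`,
the second up to `l` and `x'` afterwards is a point `xb` of `X`. Its image `φ(xb)` has the same
`ψ`-image as `y` and is right asymptotic to `φ(x')`, hence `φ(xb) ∼_ψ φ(x') ∼_ψ y ∼_ψ φ(x)`.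
The bridge from `x'` to `x` is the same construction with the roles exchanged.
-/

namespace SymbDyn

variable {A B C : Type*}

section Segment

lemma segment_eq_map_range (x : ℤ → A) (s : ℤ) (l : ℕ) :
    segment x s l = (List.range l).map fun j : ℕ => x (s + j) := by
  -- `segment` coerces `List.range l` to `List ℤ` through the list monad, i.e. by a `flatMap`.
  change List.map _ ((List.range l).flatMap (pure ∘ Nat.cast)) = _
  rw [List.flatMap_pure_eq_map, List.map_map]
  rfl

@[simp]
lemma length_segment (x : ℤ → A) (s : ℤ) (l : ℕ) : (segment x s l).length = l := by
  rw [segment_eq_map_range, List.length_map, List.length_range]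

lemma getElem?_segment (x : ℤ → A) (s : ℤ) {l j : ℕ} (hj : j < l) :
    (segment x s l)[j]? = some (x (s + j)) := by
  rw [segment_eq_map_range, List.getElem?_map, List.getElem?_range hj]
  rfl

lemma map_segment (Θ : A → B) (x : ℤ → A) (s : ℤ) (l : ℕ) :
    (segment x s l).map Θ = segment (Θ ∘ x) s l := by
  rw [segment_eq_map_range, segment_eq_map_range, List.map_map]
  rfl

lemma segment_comp_add (x : ℤ → A) (k s : ℤ) (l : ℕ) :
    segment (fun i => x (i + k)) s l = segment x (s + k) l := by
  simp only [segment_eq_map_range, add_right_comm]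

lemma segment_eq_of_occursAt {x : ℤ → A} {w : List A} {s : ℤ} (h : OccursAt x w s) :
    segment x s w.length = w := by
  refine List.ext_getElem? fun j => ?_
  rcases lt_or_ge j w.length with hj | hj
  · rw [getElem?_segment x s hj, h j hj]
  · rw [List.getElem?_eq_none (by simpa using hj), List.getElem?_eq_none hj]

lemma apply_eq_of_segment_eq {x z : ℤ → A} {s : ℤ} {l : ℕ} (h : segment x s l = segment z s l)
    {i : ℤ} (hsi : s ≤ i) (hil : i < s + l) : x i = z i := by
  have hj : (i - s).toNat < l := by omega
  have hi : s + ((i - s).toNat : ℤ) = i := by omega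
  have := congrArg (·[(i - s).toNat]?) h
  simp only [getElem?_segment _ _ hj, hi, Option.some.injEq] at this
  exact this

end Segment

section Splice

def splice (x y : ℤ → A) (m : ℤ) : ℤ → A := fun i => if i ≤ m then x i else y i

variable {x y : ℤ → A} {m i : ℤ}

lemma splice_of_le (hi : i ≤ m) : splice x y m i = x i := if_pos hi

lemma splice_of_lt (hi : m < i) : splice x y m i = y i := if_neg (not_le.2 hi)

lemma splice_of_ge (h : x m = y m) (hi : m ≤ i) : splice x y m i = y i := by
  rcases hi.eq_or_lt with rfl | hi
  · exact (splice_of_le le_rfl).trans h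
  · exact splice_of_lt hi

lemma splice_self (x : ℤ → A) (m : ℤ) : splice x x m = x := funext fun _ => ite_self _

lemma sliding_splice (Θ : A → B) (x y : ℤ → A) (m : ℤ) :
    sliding Θ (splice x y m) = splice (sliding Θ x) (sliding Θ y) m :=
  funext fun _ => apply_ite Θ _ _ _

end Splice

section PairsOccurIn

def PairsOccurIn (X : Set (ℤ → A)) (z : ℤ → A) : Prop :=
  ∀ i : ℤ, BlockOccursIn X [z i, z (i + 1)]

variable {X : Set (ℤ → A)}

lemma pairsOccurIn_of_mem {x : ℤ → A} (hx : x ∈ X) : PairsOccurIn X x := fun i =>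
  ⟨x, hx, i, fun j hj => by
    match j, hj with
    | 0, _ => simp
    | 1, _ => simp⟩

lemma PairsOccurIn.comp_add {z : ℤ → A} (hz : PairsOccurIn X z) (k : ℤ) :
    PairsOccurIn X fun i => z (i + k) := fun i => by
  simpa only [add_right_comm i 1 k] using hz (i + k)

lemma PairsOccurIn.splice {x y : ℤ → A} (hx : PairsOccurIn X x) (hy : PairsOccurIn X y)
    {m : ℤ} (h : x m = y m) : PairsOccurIn X (splice x y m) := fun i => by
  rcases le_or_gt (i + 1) m with hi | hi
  · rw [splice_of_le hi, splice_of_le (by omega)]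
    exact hx i
  · rw [splice_of_ge h hi.le, splice_of_ge h (by omega)]
    exact hy i

end PairsOccurIn

section Transition

variable {Y : Set (ℤ → B)}

lemma transTo_of_eqOn_Ici {π : (ℤ → B) → ℤ → C} {p q : ℤ → B} (hp : p ∈ Y) (hπ : π p = π q)
    {N : ℤ} (hN : EqOn p q (Ici N)) : TransTo Y π p q :=
  ⟨hπ, fun m => ⟨p, hp, fun _ _ => rfl,
    ⟨max N (m + 1), by omega, fun _ hi => hN (mem_Ici.2 (le_of_max_le_left hi))⟩, rfl⟩⟩

lemma transEquiv_of_eqOn_Ici {π : (ℤ → B) → ℤ → C} {p q : ℤ → B} (hp : p ∈ Y) (hq : q ∈ Y)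
    (hπ : π p = π q) {N : ℤ} (hN : EqOn p q (Ici N)) : TransEquiv Y π p q :=
  ⟨transTo_of_eqOn_Ici hp hπ hN, transTo_of_eqOn_Ici hq hπ.symm hN.symm⟩

variable {Ψ : B → C} {p q r : ℤ → B}

lemma TransTo.trans (hY : IsOneStepSFT Y) (h₁ : TransTo Y (sliding Ψ) p q)
    (h₂ : TransTo Y (sliding Ψ) q r) : TransTo Y (sliding Ψ) p r := by
  refine ⟨h₁.1.trans h₂.1, fun m => ?_⟩
  obtain ⟨b₁, hb₁, hb₁p, ⟨k, hmk, hb₁q⟩, hπb₁⟩ := h₁.2 m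
  obtain ⟨b₂, hb₂, hb₂q, ⟨k', hkk', hb₂r⟩, hπb₂⟩ := h₂.2 k
  have hk : b₁ k = b₂ k := (hb₁q k le_rfl).trans (hb₂q k le_rfl).symm
  refine ⟨splice b₁ b₂ k,
    hY _ ((pairsOccurIn_of_mem hb₁).splice (pairsOccurIn_of_mem hb₂) hk),
    fun i hi => ?_, ⟨k', by omega, fun i hi => ?_⟩, ?_⟩
  · rw [splice_of_le (by omega), hb₁p i hi]
  · rw [splice_of_lt (by omega), hb₂r i hi]
  · rw [sliding_splice, hπb₁, hπb₂, ← h₁.1, splice_self]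

lemma TransEquiv.trans (hY : IsOneStepSFT Y) (h₁ : TransEquiv Y (sliding Ψ) p q)
    (h₂ : TransEquiv Y (sliding Ψ) q r) : TransEquiv Y (sliding Ψ) p r :=
  ⟨h₁.1.trans hY h₂.1, h₂.2.trans hY h₁.2⟩

end Transition

variable {X : Set (ℤ → A)} {Y : Set (ℤ → B)} {Φ : A → B} {Ψ : B → C} {y : ℤ → B} {l n : ℕ}
  {a : A}

lemma exists_pairsOccurIn_of_relRoutable {x : ℤ → A} (hl : 1 ≤ l) (hn : 1 ≤ n) (hnl : n ≤ l)
    (hr : RelRoutable X Φ Ψ (segment y 1 l) n a (segment x 1 l)) :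
    ∃ f : ℤ → A, PairsOccurIn X f ∧ f 1 = x 1 ∧ f l = x l ∧ f n = a ∧
      ∀ i : ℤ, 1 ≤ i → i ≤ l → Ψ (Φ (f i)) = Ψ (y i) := by
  obtain ⟨v, ⟨p, hp, s, hocc⟩, hlen, hmap, hfirst, hlast, hmid⟩ := hr
  rw [length_segment] at hlen
  set f : ℤ → A := fun i => p (i + (s - 1))
  have hv : v = segment f 1 l := by
    rw [segment_comp_add, add_sub_cancel, ← hlen, segment_eq_of_occursAt hocc]
  subst hv
  simp only [length_segment] at hfirst hlast hmid
  rw [getElem?_segment _ _ (by omega), getElem?_segment _ _ (by omega)] at hfirst hlast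
  rw [getElem?_segment _ _ (by omega), Option.some.injEq] at hmid
  rw [map_segment, map_segment] at hmap
  have hl' : (1 : ℤ) + ((l - 1 : ℕ) : ℤ) = l := by omega
  have hn' : (1 : ℤ) + ((n - 1 : ℕ) : ℤ) = n := by omega
  refine ⟨f, (pairsOccurIn_of_mem hp).comp_add _, by simpa using hfirst, ?_, hn' ▸ hmid,
    fun i h1i hil => apply_eq_of_segment_eq hmap h1i (by omega)⟩
  simpa only [hl', Option.some.injEq] using hlast

lemma exists_relBridge_of_relRoutable (hXsft : IsOneStepSFT X) (hYsft : IsOneStepSFT Y)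
    (hφ : sliding Φ '' X = Y) (hl : 1 ≤ l) (hn : 1 ≤ n) (hnl : n ≤ l) {x x' : ℤ → A}
    (hx : x ∈ X) (hx' : x' ∈ X) (hxy : TransEquiv Y (sliding Ψ) (sliding Φ x) y)
    (hx'y : TransEquiv Y (sliding Ψ) (sliding Φ x') y)
    (hrx : RelRoutable X Φ Ψ (segment y 1 l) n a (segment x 1 l))
    (hrx' : RelRoutable X Φ Ψ (segment y 1 l) n a (segment x' 1 l)) :
    ∃ xb, IsRelBridge X Y (sliding Φ) (sliding Ψ) 0 x x' xb := by
  obtain ⟨f, hf, hf1, -, hfn, hπf⟩ := exists_pairsOccurIn_of_relRoutable hl hn hnl hrx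
  obtain ⟨g, hg, -, hgl, hgn, hπg⟩ := exists_pairsOccurIn_of_relRoutable hl hn hnl hrx'
  have h₁ : x 1 = f 1 := hf1.symm
  have h₂ : splice x f 1 n = g n := by rw [splice_of_ge h₁ (by omega), hfn, hgn]
  have h₃ : splice (splice x f 1) g n l = x' l := by rw [splice_of_ge h₂ (by omega), hgl]
  set xb := splice (splice (splice x f 1) g n) x' l
  have hxb : xb ∈ X :=
    hXsft _ ((((pairsOccurIn_of_mem hx).splice hf h₁).splice hg h₂).splice
      (pairsOccurIn_of_mem hx') h₃)
  have hπxb : sliding Ψ (sliding Φ xb) = sliding Ψ (sliding Φ x') := by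
    funext i
    refine Eq.trans ?_ (congrFun hx'y.1.1 i).symm
    change Ψ (Φ (xb i)) = Ψ (y i)
    simp only [xb, splice]
    split_ifs
    · exact congrFun hxy.1.1 i
    · exact hπf i (by omega) (by omega)
    · exact hπg i (by omega) (by omega)
    · exact congrFun hx'y.1.1 i
  have hxbx' : TransEquiv Y (sliding Ψ) (sliding Φ xb) (sliding Φ x') :=
    transEquiv_of_eqOn_Ici (hφ ▸ mem_image_of_mem _ hxb) (hφ ▸ mem_image_of_mem _ hx') hπxb
      (N := l + 1) fun _ hi => congrArg Φ (splice_of_lt (Int.lt_of_add_one_le hi))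
  refine ⟨xb, hxb, fun i hi => ?_, ⟨l + 1, by omega, fun i hi => splice_of_lt (by omega)⟩,
    (hxbx'.trans hYsft hx'y).trans hYsft ⟨hxy.2, hxy.1⟩⟩
  simp only [xb, splice_of_le (show i ≤ 1 by omega), splice_of_le (show i ≤ (n : ℤ) by omega),
    splice_of_le (show i ≤ (l : ℤ) by omega)]

end SymbDyn

namespace SymbDyn

theorem two_way_bridge_of_routable_general
    {A B C : Type*}
    (X : Set (ℤ → A)) (Y : Set (ℤ → B))
    (hXsft : IsOneStepSFT X)
    (hYsft : IsOneStepSFT Y)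
    (Φ : A → B) (Ψ : B → C)
    (hφ : sliding Φ '' X = Y)
    (y : ℤ → B) (l : ℕ) (hl : 1 ≤ l) (n : ℕ) (hn : 1 ≤ n) (hnl : n ≤ l)
    (x x' : ℤ → A) (hx : x ∈ X) (hx' : x' ∈ X)
    (hxy : TransEquiv Y (sliding Ψ) (sliding Φ x) y)
    (hx'y : TransEquiv Y (sliding Ψ) (sliding Φ x') y)
    (a : A)
    (hrx : RelRoutable X Φ Ψ (segment y 1 l) n a (segment x 1 l))
    (hrx' : RelRoutable X Φ Ψ (segment y 1 l) n a (segment x' 1 l)) :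
    (∃ xb, IsRelBridge X Y (sliding Φ) (sliding Ψ) 0 x x' xb) ∧
      (∃ xb, IsRelBridge X Y (sliding Φ) (sliding Ψ) 0 x' x xb) :=
  ⟨exists_relBridge_of_relRoutable hXsft hYsft hφ hl hn hnl hx hx' hxy hx'y hrx hrx',
    exists_relBridge_of_relRoutable hXsft hYsft hφ hl hn hnl hx' hx hx'y hxy hrx' hrx⟩

theorem two_way_bridge_of_routable
    {A B C : Type*} [Fintype A] [Fintype B] [Fintype C]
    [TopologicalSpace A] [DiscreteTopology A]
    [TopologicalSpace B] [DiscreteTopology B]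
    [TopologicalSpace C] [DiscreteTopology C]
    (X : Set (ℤ → A)) (Y : Set (ℤ → B)) (Z : Set (ℤ → C))
    (hX : IsShiftSpace X) (hXirr : IsIrreducibleShift X) (hXsft : IsOneStepSFT X)
    (hY : IsShiftSpace Y) (hYirr : IsIrreducibleShift Y) (hYsft : IsOneStepSFT Y)
    (hZ : IsShiftSpace Z)
    (Φ : A → B) (Ψ : B → C)
    (hφ : sliding Φ '' X = Y) (hψ : sliding Ψ '' Y = Z)
    (y : ℤ → B) (hy : y ∈ Y) (l : ℕ) (hl : 1 ≤ l) (n : ℕ) (hn : 1 ≤ n) (hnl : n ≤ l)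
    (M : Set A) (hpres : RelPresented X Φ Ψ (segment y 1 l) n M)
    (x x' : ℤ → A) (hx : x ∈ X) (hx' : x' ∈ X)
    (hxy : TransEquiv Y (sliding Ψ) (sliding Φ x) y)
    (hx'y : TransEquiv Y (sliding Ψ) (sliding Φ x') y)
    (a : A) (ha : a ∈ M)
    (hrx : RelRoutable X Φ Ψ (segment y 1 l) n a (segment x 1 l))
    (hrx' : RelRoutable X Φ Ψ (segment y 1 l) n a (segment x' 1 l)) :
    (∃ xb, IsRelBridge X Y (sliding Φ) (sliding Ψ) 0 x x' xb) ∧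
      (∃ xb, IsRelBridge X Y (sliding Φ) (sliding Ψ) 0 x' x xb) :=
  two_way_bridge_of_routable_general X Y hXsft hYsft Φ Ψ hφ y l hl n hn hnl x x' hx hx' hxy hx'y a
    hrx hrx'

end SymbDyn
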